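/- arXiv:2409.06384 — 4 statements merged into one kernel-verified Lean document; each statement's English description precedes it below -/
import Mathlib

section
/- Let Φ^t be the flow of a vector field F on ℝ^{m×n} (so d/dt Φ^t(Y) = F(Φ^t(Y)) and Φ^0(Y) = Y). Fix an integer k with r ≤ k ≤ 15r and suppose that there exist constants C_M, ε ≥ 0 and h₀ > 0 such that ‖Φ^h(Y) − [[Φ^h(Y)]]_k‖_F ≤ C_M h ε for all 0 < h ≤ h₀ and all Y of rank at most k. Then for every Y of rank at most k, ‖F(Y) − [[F(Y)]]_{2k}‖_F ≤ C_M ε. -/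
open Matrix

attribute [local instance] Matrix.frobeniusNormedAddCommGroup Matrix.frobeniusNormedSpace

noncomputable def frob {m n : ℕ} (A : Matrix (Fin m) (Fin n) ℝ) : ℝ :=
  Real.sqrt (∑ i, ∑ j, (A i j) ^ 2)

def IsBestRankApprox {m n : ℕ} (r : ℕ) (M B : Matrix (Fin m) (Fin n) ℝ) : Prop :=
  B.rank ≤ r ∧ ∀ C : Matrix (Fin m) (Fin n) ℝ, C.rank ≤ r → frob (M - B) ≤ frob (M - C)

lemma frob_eq_norm {m n : ℕ} (A : Matrix (Fin m) (Fin n) ℝ) : frob A = ‖A‖ := by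
  rw [frob, Matrix.frobenius_norm_def, Real.sqrt_eq_rpow]
  congr 1
  simp [Real.norm_eq_abs, sq_abs]

lemma rank_col_sub_le {m n p : ℕ} (C : Matrix (Fin m) (Fin n) ℝ) (g : Fin p → Fin n) :
    (C.submatrix id g).rank ≤ C.rank := by
  rw [rank_eq_finrank_span_cols, rank_eq_finrank_span_cols]
  apply Submodule.finrank_mono
  apply Submodule.span_mono
  rintro _ ⟨i, rfl⟩
  exact ⟨g i, rfl⟩

lemma rank_eq_card_of_li {m p : ℕ} (B : Matrix (Fin m) (Fin p) ℝ)
    (h : LinearIndependent ℝ Bᵀ) : B.rank = p := by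
  rw [rank_eq_finrank_span_cols, show B.col = Bᵀ from rfl, finrank_span_eq_card h, Fintype.card_fin]

lemma isUnit_of_rank_eq_card {p : ℕ} (A : Matrix (Fin p) (Fin p) ℝ) (h : A.rank = p) :
    IsUnit A := by
  rw [← Matrix.mulVec_surjective_iff_isUnit]
  have hrange : LinearMap.range A.mulVecLin = ⊤ := by
    apply Submodule.eq_top_of_finrank_eq
    rw [← Matrix.rank, h]; simp
  intro y
  obtain ⟨x, hx⟩ := LinearMap.range_eq_top.mp hrange y
  exact ⟨x, hx⟩

lemma exists_li_cols {m n p : ℕ} (C : Matrix (Fin m) (Fin n) ℝ) (h : p + 1 ≤ C.rank) :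
    ∃ g : Fin (p+1) → Fin n, LinearIndependent ℝ (C.submatrix id g)ᵀ := by
  obtain ⟨b, hbsub, hbspan, hbli⟩ := exists_linearIndependent ℝ (Set.range Cᵀ)
  have hfin : b.Finite := hbli.setFinite
  have : Fintype b := hfin.fintype
  have hcard : p + 1 ≤ Fintype.card b := by
    have hc : C.rank = b.toFinset.card := by
      rw [rank_eq_finrank_span_cols, show C.col = Cᵀ from rfl, ← hbspan, finrank_span_set_eq_card hbli]
    rw [Set.toFinset_card] at hc
    omega
  obtain ⟨e⟩ : Nonempty (Fin (p+1) ↪ b) :=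
    Function.Embedding.nonempty_iff_card_le.mpr (by simpa using hcard)
  have hcol : ∀ i, ∃ j, Cᵀ j = (e i : Fin m → ℝ) := fun i => hbsub (e i).2
  choose g hg using hcol
  refine ⟨g, ?_⟩
  have heq : (C.submatrix id g)ᵀ = fun i => ((e i : Fin m → ℝ)) := by
    funext i; rw [← hg i]; rfl
  rw [heq]
  exact hbli.comp e e.injective

lemma isClosed_rank_le {m n : ℕ} (p : ℕ) :
    IsClosed {C : Matrix (Fin m) (Fin n) ℝ | C.rank ≤ p} := by
  have hset : {C : Matrix (Fin m) (Fin n) ℝ | C.rank ≤ p} =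
      ⋂ g : Fin (p+1) → Fin n,
        {C | ((C.submatrix id g)ᵀ * (C.submatrix id g)).det = 0} := by
    ext C
    simp only [Set.mem_setOf_eq, Set.mem_iInter]
    constructor
    · intro hC g
      by_contra hdet
      have hu : IsUnit ((C.submatrix id g)ᵀ * (C.submatrix id g)) :=
        (Matrix.isUnit_iff_isUnit_det _).mpr (isUnit_iff_ne_zero.mpr hdet)
      have h1 := Matrix.rank_of_isUnit _ hu
      rw [Matrix.rank_transpose_mul_self, Fintype.card_fin] at h1
      have h2 := (rank_col_sub_le C g).trans hC
      omega
    · intro hg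
      by_contra hC
      obtain ⟨g, hli⟩ := exists_li_cols (p := p) C (by omega)
      have hr : (C.submatrix id g).rank = p + 1 := rank_eq_card_of_li _ hli
      have hu := isUnit_of_rank_eq_card ((C.submatrix id g)ᵀ * (C.submatrix id g))
        (by rw [Matrix.rank_transpose_mul_self, hr])
      rw [Matrix.isUnit_iff_isUnit_det, isUnit_iff_ne_zero] at hu
      exact hu (hg g)
  rw [hset]
  refine isClosed_iInter fun g => isClosed_eq ?_ continuous_const
  have hsub : Continuous fun C : Matrix (Fin m) (Fin n) ℝ => C.submatrix id g :=
    continuous_pi fun i => continuous_pi fun j =>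
      (continuous_apply (g j)).comp (continuous_apply (id i))
  exact (Continuous.matrix_mul hsub.matrix_transpose hsub).matrix_det

lemma exists_best {m n : ℕ} (p : ℕ) (M : Matrix (Fin m) (Fin n) ℝ) :
    ∃ B, IsBestRankApprox p M B := by
  have hK : IsCompact ({C : Matrix (Fin m) (Fin n) ℝ | C.rank ≤ p} ∩ Metric.closedBall M ‖M‖) :=
    (isCompact_closedBall M ‖M‖).inter_left (isClosed_rank_le p)
  have h0mem : (0 : Matrix (Fin m) (Fin n) ℝ) ∈
      {C : Matrix (Fin m) (Fin n) ℝ | C.rank ≤ p} ∩ Metric.closedBall M ‖M‖ := by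
    constructor
    · simp [Matrix.rank_zero]
    · simp [Metric.mem_closedBall, dist_eq_norm]
  obtain ⟨B, hBmem, hBmin⟩ := hK.exists_isMinOn ⟨0, h0mem⟩
    (f := fun C => ‖M - C‖) (by fun_prop)
  refine ⟨B, hBmem.1, fun C hC => ?_⟩
  rw [frob_eq_norm, frob_eq_norm]
  by_cases hball : C ∈ Metric.closedBall M ‖M‖
  · exact hBmin ⟨hC, hball⟩
  · have h1 : ‖M - B‖ ≤ ‖M‖ := by simpa using hBmin h0mem
    have h2 : ‖M‖ ≤ ‖M - C‖ := by
      rw [Metric.mem_closedBall, dist_comm, dist_eq_norm] at hball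
      linarith [le_of_not_ge hball]
    linarith

lemma rank_smul_le {m n : ℕ} (c : ℝ) (A : Matrix (Fin m) (Fin n) ℝ) :
    (c • A).rank ≤ A.rank := by
  have h : c • A = (c • (1 : Matrix (Fin m) (Fin m) ℝ)) * A := by
    rw [Matrix.smul_mul, Matrix.one_mul]
  rw [h]
  exact Matrix.rank_mul_le_right _ _

lemma rank_sub_le {m n : ℕ} (A B : Matrix (Fin m) (Fin n) ℝ) :
    (A - B).rank ≤ A.rank + B.rank := by
  have hr : LinearMap.range (A - B).mulVecLin ≤
      LinearMap.range A.mulVecLin ⊔ LinearMap.range B.mulVecLin := by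
    rintro _ ⟨x, rfl⟩
    have h : (A - B).mulVecLin x = A.mulVecLin x - B.mulVecLin x := by
      simp [Matrix.mulVecLin, Matrix.sub_mulVec]
    rw [h]
    exact Submodule.sub_mem _ (Submodule.mem_sup_left ⟨x, rfl⟩)
      (Submodule.mem_sup_right ⟨x, rfl⟩)
  calc (A - B).rank ≤ Module.finrank ℝ
        (LinearMap.range A.mulVecLin ⊔ LinearMap.range B.mulVecLin : Submodule ℝ (Fin m → ℝ)) :=
        Submodule.finrank_mono hr
    _ ≤ A.rank + B.rank := Submodule.finrank_add_le_finrank_add_finrank _ _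

/-- Low-rank approximability of `F` implied by approximability of its flow. -/
theorem stmt3 {m n : ℕ} (r k : ℕ) (hrk : r ≤ k) (hk15 : k ≤ 15 * r)
    (F : Matrix (Fin m) (Fin n) ℝ → Matrix (Fin m) (Fin n) ℝ)
    (Φ : ℝ → Matrix (Fin m) (Fin n) ℝ → Matrix (Fin m) (Fin n) ℝ)
    (hΦ0 : ∀ Y, Φ 0 Y = Y)
    (hΦ' : ∀ (t : ℝ) (Y : Matrix (Fin m) (Fin n) ℝ),
      HasDerivAt (fun s => Φ s Y) (F (Φ t Y)) t)
    (C_M ε h₀ : ℝ) (hCM : 0 ≤ C_M) (hε : 0 ≤ ε) (hh₀ : 0 < h₀)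
    (happrox : ∀ h : ℝ, 0 < h → h ≤ h₀ → ∀ Y : Matrix (Fin m) (Fin n) ℝ, Y.rank ≤ k →
      ∀ Tr, IsBestRankApprox k (Φ h Y) Tr → frob (Φ h Y - Tr) ≤ C_M * h * ε) :
    ∀ Y : Matrix (Fin m) (Fin n) ℝ, Y.rank ≤ k →
      ∀ G, IsBestRankApprox (2 * k) (F Y) G → frob (F Y - G) ≤ C_M * ε := by
  intro Y hY G hG
  rw [frob_eq_norm]
  have key : ∀ h : ℝ, 0 < h → h ≤ h₀ →
      ‖F Y - G‖ ≤ ‖F Y - h⁻¹ • (Φ h Y - Y)‖ + C_M * ε := by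
    intro h h1 h2
    obtain ⟨Tr, hTr⟩ := exists_best k (Φ h Y)
    have hrankD : (h⁻¹ • (Tr - Y)).rank ≤ 2 * k := by
      have := (rank_smul_le h⁻¹ (Tr - Y)).trans ((rank_sub_le Tr Y).trans
        (add_le_add hTr.1 hY))
      omega
    have step1 : ‖F Y - G‖ ≤ ‖F Y - h⁻¹ • (Tr - Y)‖ := by
      have := hG.2 _ hrankD
      rwa [frob_eq_norm, frob_eq_norm] at this
    have step2 : ‖F Y - h⁻¹ • (Tr - Y)‖ ≤
        ‖F Y - h⁻¹ • (Φ h Y - Y)‖ + ‖h⁻¹ • (Φ h Y - Y) - h⁻¹ • (Tr - Y)‖ := by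
      have := norm_sub_le (F Y - h⁻¹ • (Φ h Y - Y)) (h⁻¹ • (Tr - Y) - h⁻¹ • (Φ h Y - Y))
      rw [norm_sub_rev (h⁻¹ • (Tr - Y)) _] at this
      convert this using 2
      case e'_2 => rfl
      case e'_3 => abel
    have step3 : ‖h⁻¹ • (Φ h Y - Y) - h⁻¹ • (Tr - Y)‖ ≤ C_M * ε := by
      have heq : h⁻¹ • (Φ h Y - Y) - h⁻¹ • (Tr - Y) = h⁻¹ • (Φ h Y - Tr) := by
        rw [← smul_sub]
        congr 1
        abel
      rw [heq, norm_smul, Real.norm_eq_abs, abs_inv, abs_of_pos h1]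
      have happ := happrox h h1 h2 Y hY Tr hTr
      rw [frob_eq_norm] at happ
      calc h⁻¹ * ‖Φ h Y - Tr‖ ≤ h⁻¹ * (C_M * h * ε) := by
            apply mul_le_mul_of_nonneg_left happ (by positivity)
        _ = C_M * ε := by field_simp
    linarith
  have hder : HasDerivAt (fun s => Φ s Y) (F Y) 0 := by
    have := hΦ' 0 Y
    rwa [hΦ0 Y] at this
  have hslope := hasDerivAt_iff_tendsto_slope.mp hder
  have hslope' : Filter.Tendsto (fun h : ℝ => h⁻¹ • (Φ h Y - Y)) (nhdsWithin 0 (Set.Ioi 0))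
      (nhds (F Y)) := by
    have hmono : nhdsWithin (0:ℝ) (Set.Ioi 0) ≤ nhdsWithin 0 {(0:ℝ)}ᶜ :=
      nhdsWithin_mono _ (fun x hx => ne_of_gt hx)
    have h := hslope.mono_left hmono
    refine h.congr (fun h => ?_)
    simp [slope_def_field, slope, hΦ0, vsub_eq_sub]
  have hlim : Filter.Tendsto (fun h : ℝ => ‖F Y - h⁻¹ • (Φ h Y - Y)‖ + C_M * ε)
      (nhdsWithin 0 (Set.Ioi 0)) (nhds (0 + C_M * ε)) := by
    have h1 : Filter.Tendsto (fun h : ℝ => ‖F Y - h⁻¹ • (Φ h Y - Y)‖)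
        (nhdsWithin 0 (Set.Ioi 0)) (nhds ‖F Y - F Y‖) :=
      ((tendsto_const_nhds.sub hslope').norm)
    rw [sub_self, norm_zero] at h1
    exact h1.add tendsto_const_nhds
  rw [zero_add] at hlim
  refine ge_of_tendsto hlim ?_
  filter_upwards [Ioc_mem_nhdsGT_of_mem (Set.left_mem_Ico.mpr hh₀)] with h hh
  exact key h hh.1 hh.2
end

section
/- Let B = diag(0, 10, −10) and C = diag(0, 10^{−5}e^{−1}, 0) be 3×3 real matrices, and consider the linear ODE Ẏ(t) = B Y(t) + C with initial value Y(0) = diag(1, 0, 10^{−6} e). Then the solution at time t is Y(t) = diag(1, 10^{−6}(e^{10t − 1} − e^{−1}), 10^{−6} e^{1 − 10 t}). In particular, at t = 1 the distance of Y(1) to the set of matrices of rank at most 2 (in Frobenius norm) is at most 1.24 × 10^{−10}, while the solution Z(t) of the tangent-space-projected dynamics, Z(1) = diag(1, 0, 10^{−6} e^{−9}), satisfies ‖Y(1) − Z(1)‖_F ≥ 0.008. -/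
open Matrix

attribute [local instance] Matrix.frobeniusNormedAddCommGroup Matrix.frobeniusNormedSpace

private lemma ode_const (f : ℝ → ℝ) (hf : ∀ t, HasDerivAt f 0 t) (t : ℝ) : f t = f 0 :=
  is_const_of_deriv_eq_zero (fun s => (hf s).differentiableAt) (fun s => (hf s).deriv) t 0

private lemma ode_lin (a c : ℝ) (ha : a ≠ 0) (f : ℝ → ℝ)
    (hf : ∀ t, HasDerivAt f (a * f t + c) t) (t : ℝ) :
    f t = Real.exp (a * t) * (f 0 + c / a) - c / a := by
  have key : ∀ s : ℝ, Real.exp (-(a * s)) * (f s + c / a) = f 0 + c / a := by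
    have hg : ∀ s : ℝ, HasDerivAt (fun s => Real.exp (-(a * s)) * (f s + c / a)) 0 s := by
      intro s
      have h1 : HasDerivAt (fun s : ℝ => -(a * s)) (-a) s := by
        simpa using ((hasDerivAt_id s).const_mul a).fun_neg
      have h2 := h1.exp
      have h3 := (hf s).add_const (c / a)
      have := h2.fun_mul h3
      refine this.congr_deriv ?_
      rw [mul_assoc, show -a * (f s + c / a) = -(a * f s + c) by field_simp]
      ring
    intro s
    have := ode_const _ hg s
    simpa using this
  have hk := key t
  have h3 : Real.exp (a * t) * (Real.exp (-(a * t)) * (f t + c / a))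
      = Real.exp (a * t) * (f 0 + c / a) := by rw [hk]
  rw [← mul_assoc, ← Real.exp_add, add_neg_cancel, Real.exp_zero, one_mul] at h3
  linarith

private lemma exp_nine_lb : (8064.6 : ℝ) ≤ Real.exp 9 := by
  have h : Real.exp 9 = Real.exp 1 ^ (9 : ℕ) := by
    rw [← Real.exp_nat_mul]; norm_num
  have h1 : (2.7182818283 : ℝ) ≤ Real.exp 1 := le_of_lt Real.exp_one_gt_d9
  have h2 : (2.7182818283 : ℝ) ^ (9 : ℕ) ≤ Real.exp 1 ^ (9 : ℕ) :=
    pow_le_pow_left₀ (by norm_num) h1 9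
  nlinarith [h2]

/-- The concrete example: solution formula of the linear matrix ODE, near-rank-2
approximability of the true solution at `t = 1`, and the large error committed by the
tangent-space-projected dynamics. -/
theorem stmt10 (Y : ℝ → Matrix (Fin 3) (Fin 3) ℝ)
    (hY : ∀ t : ℝ, HasDerivAt Y
      (Matrix.diagonal ![0, 10, -10] * Y t
        + Matrix.diagonal ![0, 1e-5 * Real.exp (-1), 0]) t)
    (hY0 : Y 0 = Matrix.diagonal ![1, 0, 1e-6 * Real.exp 1]) :
    (∀ t : ℝ, Y t = Matrix.diagonal
        ![1, 1e-6 * (Real.exp (10 * t - 1) - Real.exp (-1)), 1e-6 * Real.exp (1 - 10 * t)]) ∧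
    sInf {d : ℝ | ∃ W : Matrix (Fin 3) (Fin 3) ℝ, W.rank ≤ 2 ∧ d = frob (Y 1 - W)}
      ≤ 1.24e-10 ∧
    0.008 ≤ frob (Y 1 - Matrix.diagonal ![1, 0, 1e-6 * Real.exp (-9)]) := by
  -- entrywise derivatives
  have hE : ∀ (i j : Fin 3) (t : ℝ), HasDerivAt (fun s => Y s i j)
      ((![0, 10, -10] : Fin 3 → ℝ) i * Y t i j
        + Matrix.diagonal ![0, 1e-5 * Real.exp (-1), 0] i j) t := by
    intro i j t
    have h := ((Matrix.entryLinearMap ℝ ℝ i j :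
      Matrix (Fin 3) (Fin 3) ℝ →ₗ[ℝ] ℝ).toContinuousLinearMap).hasFDerivAt.comp_hasDerivAt
      t (hY t)
    have h2 : HasDerivAt (fun s => Y s i j)
        ((Matrix.diagonal ![0, 10, -10] * Y t + Matrix.diagonal ![0, 1e-5 * Real.exp (-1), 0] :
          Matrix (Fin 3) (Fin 3) ℝ) i j) t := h
    simpa [Matrix.add_apply, Matrix.diagonal_mul] using h2
  have hsol : ∀ t : ℝ, Y t = Matrix.diagonal
      ![1, 1e-6 * (Real.exp (10 * t - 1) - Real.exp (-1)), 1e-6 * Real.exp (1 - 10 * t)] := by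
    intro t
    have e00 : Y t 0 0 = 1 := by
      have h' : ∀ s, HasDerivAt (fun s => Y s 0 0) 0 s := by
        intro s; simpa [Matrix.diagonal_apply] using hE 0 0 s
      rw [ode_const _ h' t, hY0]; simp [Matrix.diagonal_apply]
    have e01 : Y t 0 1 = 0 := by
      have h' : ∀ s, HasDerivAt (fun s => Y s 0 1) 0 s := by
        intro s; simpa [Matrix.diagonal_apply] using hE 0 1 s
      rw [ode_const _ h' t, hY0]; simp [Matrix.diagonal_apply]
    have e02 : Y t 0 2 = 0 := by
      have h' : ∀ s, HasDerivAt (fun s => Y s 0 2) 0 s := by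
        intro s; simpa [Matrix.diagonal_apply] using hE 0 2 s
      rw [ode_const _ h' t, hY0]; simp [Matrix.diagonal_apply]
    have e10 : Y t 1 0 = 0 := by
      have h' : ∀ s, HasDerivAt (fun s => Y s 1 0) (10 * Y s 1 0 + 0) s := by
        intro s; simpa [Matrix.diagonal_apply] using hE 1 0 s
      rw [ode_lin 10 0 (by norm_num) _ h' t, hY0]; simp [Matrix.diagonal_apply]
    have e11 : Y t 1 1 = 1e-6 * (Real.exp (10 * t - 1) - Real.exp (-1)) := by
      have h' : ∀ s, HasDerivAt (fun s => Y s 1 1)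
          (10 * Y s 1 1 + 1e-5 * Real.exp (-1)) s := by
        intro s; simpa [Matrix.diagonal_apply] using hE 1 1 s
      rw [ode_lin 10 (1e-5 * Real.exp (-1)) (by norm_num) _ h' t, hY0]
      simp only [Matrix.diagonal_apply, Matrix.cons_val]
      norm_num
      rw [show (10 : ℝ) * t - 1 = 10 * t + (-1) by ring, Real.exp_add]
      ring
    have e12 : Y t 1 2 = 0 := by
      have h' : ∀ s, HasDerivAt (fun s => Y s 1 2) (10 * Y s 1 2 + 0) s := by
        intro s; simpa [Matrix.diagonal_apply] using hE 1 2 s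
      rw [ode_lin 10 0 (by norm_num) _ h' t, hY0]; simp [Matrix.diagonal_apply]
    have e20 : Y t 2 0 = 0 := by
      have h' : ∀ s, HasDerivAt (fun s => Y s 2 0) ((-10) * Y s 2 0 + 0) s := by
        intro s; simpa [Matrix.diagonal_apply] using hE 2 0 s
      rw [ode_lin (-10) 0 (by norm_num) _ h' t, hY0]; simp [Matrix.diagonal_apply]
    have e21 : Y t 2 1 = 0 := by
      have h' : ∀ s, HasDerivAt (fun s => Y s 2 1) ((-10) * Y s 2 1 + 0) s := by
        intro s; simpa [Matrix.diagonal_apply] using hE 2 1 s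
      rw [ode_lin (-10) 0 (by norm_num) _ h' t, hY0]; simp [Matrix.diagonal_apply]
    have e22 : Y t 2 2 = 1e-6 * Real.exp (1 - 10 * t) := by
      have h' : ∀ s, HasDerivAt (fun s => Y s 2 2) ((-10) * Y s 2 2 + 0) s := by
        intro s; simpa [Matrix.diagonal_apply] using hE 2 2 s
      rw [ode_lin (-10) 0 (by norm_num) _ h' t, hY0]
      simp only [Matrix.diagonal_apply, Matrix.cons_val]
      norm_num
      rw [show (1 : ℝ) - 10 * t = -10 * t + 1 by ring, Real.exp_add]
      ring
    funext i j
    fin_cases i <;> fin_cases j <;>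
      simp [Matrix.diagonal_apply, e00, e01, e02, e10, e11, e12, e20, e21, e22]
  refine ⟨hsol, ?_, ?_⟩
  · -- rank-2 approximation
    set x : ℝ := 1e-6 * (Real.exp (10 * 1 - 1) - Real.exp (-1)) with hx
    set W : Matrix (Fin 3) (Fin 3) ℝ := Matrix.diagonal ![1, x, 0] with hW
    have hrank : W.rank ≤ 2 := by
      rw [hW, Matrix.rank_diagonal]
      have h3 : Fintype.card {i : Fin 3 // (![1, x, 0] : Fin 3 → ℝ) i ≠ 0} < 3 := by
        have := Fintype.card_subtype_lt (α := Fin 3)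
          (p := fun i => (![1, x, 0] : Fin 3 → ℝ) i ≠ 0) (x := 2) (by simp)
        simpa using this
      omega
    have hdiff : Y 1 - W = Matrix.diagonal ![0, 0, 1e-6 * Real.exp (-9)] := by
      rw [hsol 1]
      funext i j
      fin_cases i <;> fin_cases j <;>
        norm_num [hW, hx, Matrix.sub_apply, Matrix.diagonal_apply]
    have hfrob : frob (Y 1 - W) = 1e-6 * Real.exp (-9) := by
      rw [hdiff]
      simp only [frob, Fin.sum_univ_three, Matrix.diagonal_apply, Matrix.cons_val]
      norm_num [Fin.ext_iff]
      rw [Real.sqrt_sq (by positivity)]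
    have hmem : frob (Y 1 - W) ∈
        {d : ℝ | ∃ W : Matrix (Fin 3) (Fin 3) ℝ, W.rank ≤ 2 ∧ d = frob (Y 1 - W)} :=
      ⟨W, hrank, rfl⟩
    have hbdd : BddBelow
        {d : ℝ | ∃ W : Matrix (Fin 3) (Fin 3) ℝ, W.rank ≤ 2 ∧ d = frob (Y 1 - W)} :=
      ⟨0, by rintro d ⟨V, -, rfl⟩; exact Real.sqrt_nonneg _⟩
    calc sInf _ ≤ frob (Y 1 - W) := csInf_le hbdd hmem
      _ = 1e-6 * Real.exp (-9) := hfrob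
      _ ≤ 1.24e-10 := by
          have h9 := exp_nine_lb
          have hle : Real.exp (-9) ≤ 1.24e-4 := by
            rw [Real.exp_neg, inv_le_comm₀ (by positivity) (by norm_num)]
            calc (1.24e-4 : ℝ)⁻¹ ≤ 8064.6 := by norm_num
              _ ≤ Real.exp 9 := h9
          nlinarith
  · -- error of projected dynamics
    have hpos : (0 : ℝ) ≤ 1e-6 * (Real.exp 9 - Real.exp (-1)) := by
      have := exp_nine_lb
      have h1 : Real.exp (-1) ≤ 1 := by
        rw [Real.exp_le_one_iff]; norm_num
      nlinarith
    have hdiff : Y 1 - Matrix.diagonal ![1, 0, 1e-6 * Real.exp (-9)]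
        = Matrix.diagonal ![0, 1e-6 * (Real.exp 9 - Real.exp (-1)), 0] := by
      rw [hsol 1]
      funext i j
      fin_cases i <;> fin_cases j <;>
        norm_num [Matrix.sub_apply, Matrix.diagonal_apply]
    rw [hdiff]
    have hfrob : frob (Matrix.diagonal ![0, 1e-6 * (Real.exp 9 - Real.exp (-1)), 0])
        = 1e-6 * (Real.exp 9 - Real.exp (-1)) := by
      simp only [frob, Fin.sum_univ_three, Matrix.diagonal_apply, Matrix.cons_val]
      norm_num [Fin.ext_iff]
    rw [hfrob]
    have := exp_nine_lb
    have h1 : Real.exp (-1) ≤ 1 := by rw [Real.exp_le_one_iff]; norm_num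
    nlinarith
end

section
/- Let Z be an m×n real matrix, Ω ∈ ℝ^{n×(r+p)}, Ψ ∈ ℝ^{m×(r+p+ℓ)}, and suppose Ψ^T Z Ω has full column rank r+p. Let ZΩ = QR be a QR factorization with Q having orthonormal columns spanning the column space of ZΩ. Then ZΩ (Ψ^T Z Ω)^† Ψ^T Z = Q (Ψ^T Q)^† Ψ^T Z, i.e. the generalized Nyström approximation before truncation can be computed via an orthonormal basis of the range of ZΩ. -/
open Matrix

/-- `P` is the Moore–Penrose pseudoinverse of `A` (the four Penrose conditions). -/
def IsMoorePenrose {a b : ℕ} (A : Matrix (Fin a) (Fin b) ℝ)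
    (P : Matrix (Fin b) (Fin a) ℝ) : Prop :=
  A * P * A = A ∧ P * A * P = P ∧ (A * P)ᵀ = A * P ∧ (P * A)ᵀ = P * A

lemma mp_unique {a b : ℕ} (A : Matrix (Fin a) (Fin b) ℝ)
    (P P' : Matrix (Fin b) (Fin a) ℝ)
    (h : IsMoorePenrose A P) (h' : IsMoorePenrose A P') : P = P' := by
  obtain ⟨h1, h2, h3, h4⟩ := h
  obtain ⟨h1', h2', h3', h4'⟩ := h'
  have hAP : A * P = A * P' := by
    calc A * P = (A * P' * A) * P := by rw [h1']
    _ = (A * P') * (A * P) := by simp only [Matrix.mul_assoc]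
    _ = (A * P')ᵀ * (A * P)ᵀ := by rw [h3, h3']
    _ = P'ᵀ * ((A * P * A)ᵀ) := by
        simp only [Matrix.transpose_mul, Matrix.mul_assoc]
    _ = P'ᵀ * Aᵀ := by rw [h1]
    _ = (A * P')ᵀ := by rw [Matrix.transpose_mul]
    _ = A * P' := h3'
  have hPA : P * A = P' * A := by
    calc P * A = P * (A * P' * A) := by rw [h1']
    _ = (P * A) * (P' * A) := by simp only [Matrix.mul_assoc]
    _ = (P * A)ᵀ * (P' * A)ᵀ := by rw [h4, h4']
    _ = ((A * P * A)ᵀ) * P'ᵀ := by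
        simp only [Matrix.transpose_mul, Matrix.mul_assoc]
    _ = Aᵀ * P'ᵀ := by rw [h1]
    _ = (P' * A)ᵀ := by rw [Matrix.transpose_mul]
    _ = P' * A := h4'
  calc P = P * A * P := h2.symm
  _ = P * (A * P') := by rw [Matrix.mul_assoc, hAP]
  _ = (P' * A) * P' := by rw [← Matrix.mul_assoc, hPA]
  _ = P' := h2'

lemma isUnit_of_rank_eq {k : ℕ} (A : Matrix (Fin k) (Fin k) ℝ) (h : A.rank = k) :
    IsUnit A := by
  rw [← Matrix.mulVec_surjective_iff_isUnit]
  have hr : LinearMap.range A.mulVecLin = ⊤ := by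
    apply Submodule.eq_top_of_finrank_eq
    rw [show Module.finrank ℝ ↥(LinearMap.range A.mulVecLin) = A.rank from rfl, h,
      Module.finrank_fin_fun]
  intro y
  obtain ⟨x, hx⟩ := LinearMap.range_eq_top.mp hr y
  exact ⟨x, hx⟩

/-- The generalized Nyström approximation before truncation can be computed via an
orthonormal basis `Q` of the range of `ZΩ`:
`ZΩ (ΨᵀZΩ)† ΨᵀZ = Q (ΨᵀQ)† ΨᵀZ`. -/
theorem stmt12 (m n r p ℓ : ℕ)
    (Z : Matrix (Fin m) (Fin n) ℝ)
    (Ω : Matrix (Fin n) (Fin (r + p)) ℝ)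
    (Ψ : Matrix (Fin m) (Fin (r + p + ℓ)) ℝ)
    (Q : Matrix (Fin m) (Fin (r + p)) ℝ)
    (R : Matrix (Fin (r + p)) (Fin (r + p)) ℝ)
    (hQR : Z * Ω = Q * R) (hQ : Qᵀ * Q = 1)
    (hrank : (Ψᵀ * (Z * Ω)).rank = r + p)
    (P₁ P₂ : Matrix (Fin (r + p)) (Fin (r + p + ℓ)) ℝ)
    (hP₁ : IsMoorePenrose (Ψᵀ * (Z * Ω)) P₁)
    (hP₂ : IsMoorePenrose (Ψᵀ * Q) P₂) :
    Z * Ω * (P₁ * (Ψᵀ * Z)) = Q * (P₂ * (Ψᵀ * Z)) := by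
  set A := Ψᵀ * Q with hA
  have hM : Ψᵀ * (Z * Ω) = A * R := by rw [hQR, hA, Matrix.mul_assoc]
  -- R is invertible
  have hRrank : R.rank = r + p := by
    refine le_antisymm ?_ ?_
    · simpa using R.rank_le_card_width
    · calc r + p = (Ψᵀ * (Z * Ω)).rank := hrank.symm
      _ = (A * R).rank := by rw [hM]
      _ ≤ R.rank := Matrix.rank_mul_le_right A R
  have hR : IsUnit R := isUnit_of_rank_eq R (by simpa using hRrank)
  have hRdet : IsUnit R.det := (Matrix.isUnit_iff_isUnit_det R).mp hR
  -- A has full column rank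
  have hArank : A.rank = r + p := by
    rw [← Matrix.rank_mul_eq_left_of_isUnit_det R A hRdet, ← hM, hrank]
  obtain ⟨h1, h2, h3, h4⟩ := hP₂
  -- P₂ * A = 1
  have hP₂A : P₂ * A = 1 := by
    have hUnit : IsUnit (P₂ * A) := by
      apply isUnit_of_rank_eq
      refine le_antisymm (by simpa using (P₂ * A).rank_le_card_width) ?_
      calc r + p = A.rank := hArank.symm
      _ = (A * (P₂ * A)).rank := by rw [← Matrix.mul_assoc, h1]
      _ ≤ (P₂ * A).rank := Matrix.rank_mul_le_right A (P₂ * A)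
    have hIdem : (P₂ * A) * (P₂ * A) = P₂ * A := by
      calc (P₂ * A) * (P₂ * A) = (P₂ * A * P₂) * A := by simp only [Matrix.mul_assoc]
      _ = P₂ * A := by rw [h2]
    have hd : IsUnit (P₂ * A).det := (Matrix.isUnit_iff_isUnit_det _).mp hUnit
    have hinv : (P₂ * A) * (P₂ * A)⁻¹ = 1 := Matrix.mul_nonsing_inv _ hd
    calc P₂ * A = (P₂ * A) * (P₂ * A) * (P₂ * A)⁻¹ := by
          rw [Matrix.mul_assoc, hinv, Matrix.mul_one]
    _ = (P₂ * A) * (P₂ * A)⁻¹ := by rw [hIdem]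
    _ = 1 := hinv
  -- R⁻¹ * P₂ is a Moore–Penrose inverse of A * R
  have hRR : R * R⁻¹ = 1 := Matrix.mul_nonsing_inv R hRdet
  have hRR' : R⁻¹ * R = 1 := Matrix.nonsing_inv_mul R hRdet
  have hMP : IsMoorePenrose (A * R) (R⁻¹ * P₂) := by
    have hMPprod : (A * R) * (R⁻¹ * P₂) = A * P₂ := by
      calc (A * R) * (R⁻¹ * P₂) = A * ((R * R⁻¹) * P₂) := by simp only [Matrix.mul_assoc]
      _ = A * P₂ := by rw [hRR, Matrix.one_mul]
    have hPM : (R⁻¹ * P₂) * (A * R) = 1 := by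
      calc (R⁻¹ * P₂) * (A * R) = R⁻¹ * ((P₂ * A) * R) := by simp only [Matrix.mul_assoc]
      _ = 1 := by rw [hP₂A, Matrix.one_mul, hRR']
    refine ⟨?_, ?_, ?_, ?_⟩
    · calc (A * R) * (R⁻¹ * P₂) * (A * R) = (A * P₂) * (A * R) := by rw [hMPprod]
      _ = (A * P₂ * A) * R := by simp only [Matrix.mul_assoc]
      _ = A * R := by rw [h1]
    · calc (R⁻¹ * P₂) * (A * R) * (R⁻¹ * P₂) = 1 * (R⁻¹ * P₂) := by rw [hPM]
      _ = R⁻¹ * P₂ := Matrix.one_mul _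
    · rw [hMPprod]; exact h3
    · rw [hPM]; simp
  have hP₁eq : P₁ = R⁻¹ * P₂ := mp_unique (A * R) P₁ (R⁻¹ * P₂) (hM ▸ hP₁) hMP
  calc Z * Ω * (P₁ * (Ψᵀ * Z)) = Q * R * (R⁻¹ * P₂ * (Ψᵀ * Z)) := by rw [hQR, hP₁eq]
  _ = Q * ((R * R⁻¹) * (P₂ * (Ψᵀ * Z))) := by simp only [Matrix.mul_assoc]
  _ = Q * (P₂ * (Ψᵀ * Z)) := by rw [hRR, Matrix.one_mul]
end

section
/- Let M be an m×n real matrix and Q an m×k matrix with orthonormal columns. For any r ≤ k, ‖M − Q[[Q^T M]]_r‖_F² = ‖M − QQ^T M‖_F² + ‖QQ^T M − Q[[Q^T M]]_r‖_F², and consequently ‖M − Q[[Q^T M]]_r‖_F ≤ ‖M − QQ^T M‖_F + ‖Q^T M − [[Q^T M]]_r‖_F. -/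
open Matrix

lemma frob_nonneg {m n : ℕ} (A : Matrix (Fin m) (Fin n) ℝ) : 0 ≤ frob A :=
  Real.sqrt_nonneg _

lemma frob_sq {m n : ℕ} (A : Matrix (Fin m) (Fin n) ℝ) :
    frob A ^ 2 = ∑ i, ∑ j, (A i j) ^ 2 := by
  apply Real.sq_sqrt
  positivity

lemma sum_mul_eq_trace {m n : ℕ} (A B : Matrix (Fin m) (Fin n) ℝ) :
    ∑ i, ∑ j, A i j * B i j = Matrix.trace (Aᵀ * B) := by
  rw [Matrix.trace]
  rw [Finset.sum_comm]
  simp [Matrix.mul_apply, Matrix.diag]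

lemma frob_sq_eq_trace {m n : ℕ} (A : Matrix (Fin m) (Fin n) ℝ) :
    frob A ^ 2 = Matrix.trace (Aᵀ * A) := by
  rw [frob_sq, ← sum_mul_eq_trace]
  simp [sq]

lemma frob_mul_orth {m n k : ℕ} (Q : Matrix (Fin m) (Fin k) ℝ) (hQ : Qᵀ * Q = 1)
    (X : Matrix (Fin k) (Fin n) ℝ) : frob (Q * X) = frob X := by
  have h : frob (Q * X) ^ 2 = frob X ^ 2 := by
    rw [frob_sq_eq_trace, frob_sq_eq_trace, Matrix.transpose_mul]
    rw [Matrix.mul_assoc, ← Matrix.mul_assoc Qᵀ, hQ, Matrix.one_mul]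
  have := frob_nonneg (Q * X)
  have := frob_nonneg X
  nlinarith

/-- Pythagorean identity and the resulting triangle bound for the truncated projection
`Q [[Qᵀ M]]_r` with `Q` having orthonormal columns. -/
theorem stmt19 {m n k : ℕ} (r : ℕ) (hrk : r ≤ k)
    (M : Matrix (Fin m) (Fin n) ℝ) (Q : Matrix (Fin m) (Fin k) ℝ)
    (hQ : Qᵀ * Q = 1)
    (T : Matrix (Fin k) (Fin n) ℝ)
    (hT : IsBestRankApprox r (Qᵀ * M) T) :
    frob (M - Q * T) ^ 2
        = frob (M - Q * (Qᵀ * M)) ^ 2 + frob (Q * (Qᵀ * M) - Q * T) ^ 2 ∧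
    frob (M - Q * T) ≤ frob (M - Q * (Qᵀ * M)) + frob (Qᵀ * M - T) := by
  set A := M - Q * (Qᵀ * M) with hA
  set B := Q * (Qᵀ * M) - Q * T with hB
  have hsum : M - Q * T = A + B := by rw [hA, hB, sub_add_sub_cancel]
  have hcross : ∑ i, ∑ j, A i j * B i j = 0 := by
    rw [sum_mul_eq_trace]
    have hAtQ : Aᵀ * Q = 0 := by
      rw [hA, Matrix.transpose_sub, Matrix.sub_mul, Matrix.transpose_mul,
        Matrix.transpose_mul, Matrix.transpose_transpose, Matrix.mul_assoc,
        Matrix.mul_assoc, hQ, Matrix.mul_one, sub_self]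
    have hBQ : B = Q * ((Qᵀ * M) - T) := by rw [hB, Matrix.mul_sub]
    rw [hBQ, ← Matrix.mul_assoc, hAtQ, Matrix.zero_mul, Matrix.trace_zero]
  have hpyth : frob (M - Q * T) ^ 2 = frob A ^ 2 + frob B ^ 2 := by
    rw [hsum, frob_sq, frob_sq, frob_sq]
    have : ∀ i, ∑ j, ((A + B) i j) ^ 2
        = (∑ j, (A i j) ^ 2) + (∑ j, (B i j) ^ 2) + 2 * ∑ j, A i j * B i j := by
      intro i
      rw [← Finset.sum_add_distrib, Finset.mul_sum, ← Finset.sum_add_distrib]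
      apply Finset.sum_congr rfl
      intro j _
      simp [Matrix.add_apply]
      ring
    simp only [this]
    rw [Finset.sum_add_distrib, Finset.sum_add_distrib, ← Finset.mul_sum, hcross]
    ring
  have hBfr : frob B = frob (Qᵀ * M - T) := by
    have : B = Q * ((Qᵀ * M) - T) := by rw [hB, Matrix.mul_sub]
    rw [this, frob_mul_orth Q hQ]
  constructor
  · exact hpyth
  · have h1 := frob_nonneg A
    have h2 := frob_nonneg B
    have h3 := frob_nonneg (M - Q * T)
    rw [← hBfr]
    nlinarith [hpyth]
end
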